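/- arXiv:2408.03870 — 4 statements merged into one kernel-verified Lean document; each statement's English description precedes it below -/
import Mathlib

section
/- For every speed c with 0 ≤ c < √2, the function u(x) = √((2−c²)/2)·tanh(√(2−c²)·x/2) − i·c/√2 satisfies the equation i·c·u′ + u′′ + u·(1 − |u|²) = 0 on ℝ. -/
/-!
Writing `t = tanh (k x)`, the ansatz `u = b t - i κ` has `u' = b k (1 - t²)`,
`u'' = -2 b k² t (1 - t²)` and `1 - |u|² = b² (1 - t²)` once `b² + κ² = 1`. The equation then
splits into a real part, which vanishes when `2 k² = b²`, and an imaginary part, which vanishes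
when `c k = κ b`. For `b = √((2 - c²)/2)`, `k = √(2 - c²)/2`, `κ = c/√2` all three relations
hold as soon as `c² ≤ 2`.
-/

open Complex

theorem Real.hasDerivAt_tanh (x : ℝ) : HasDerivAt Real.tanh (1 - Real.tanh x ^ 2) x := by
  have h := (Real.hasDerivAt_sinh x).div (Real.hasDerivAt_cosh x) (Real.cosh_pos x).ne'
  rw [show Real.sinh / Real.cosh = Real.tanh from
    funext fun y => (Real.tanh_eq_sinh_div_cosh y).symm] at h
  refine h.congr_deriv ?_
  rw [Real.tanh_eq_sinh_div_cosh]
  field_simp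

theorem hasDerivAt_tanh_mul (k x : ℝ) :
    HasDerivAt (fun y => Real.tanh (k * y)) (k * (1 - Real.tanh (k * x) ^ 2)) x := by
  refine ((Real.hasDerivAt_tanh (k * x)).comp x ((hasDerivAt_id x).const_mul k)).congr_deriv ?_
  ring

section KinkProfile

variable (b k : ℝ)

theorem hasDerivAt_mul_tanh_mul (x : ℝ) :
    HasDerivAt (fun y => b * Real.tanh (k * y)) (b * k * (1 - Real.tanh (k * x) ^ 2)) x := by
  simpa [mul_assoc] using (hasDerivAt_tanh_mul k x).const_mul b

theorem hasDerivAt_mul_sech_sq_mul (x : ℝ) :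
    HasDerivAt (fun y => b * k * (1 - Real.tanh (k * y) ^ 2))
      (-2 * b * k ^ 2 * Real.tanh (k * x) * (1 - Real.tanh (k * x) ^ 2)) x := by
  refine ((((hasDerivAt_tanh_mul k x).fun_pow 2).const_sub 1).const_mul (b * k)).congr_deriv ?_
  ring

end KinkProfile

theorem deriv_ofReal_sub_const {f f' : ℝ → ℝ} (hf : ∀ x, HasDerivAt f (f' x) x) (z : ℂ) :
    deriv (fun x => (f x : ℂ) - z) = fun x => (f' x : ℂ) :=
  funext fun x => ((hf x).ofReal_comp.sub_const z).deriv

theorem Complex.sq_norm_ofReal_sub_I_mul_ofReal (r s : ℝ) :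
    ‖(r : ℂ) - I * s‖ ^ 2 = r ^ 2 + s ^ 2 := by
  rw [← normSq_eq_norm_sq, normSq_apply]
  simp only [sub_re, sub_im, mul_re, mul_im, ofReal_re, ofReal_im, I_re, I_im]
  ring

theorem tanh_profile_solves_GP {b k κ c : ℝ} (hb : b ^ 2 + κ ^ 2 = 1) (hk : 2 * k ^ 2 = b ^ 2)
    (hc : c * k = κ * b) {u : ℝ → ℂ}
    (hu : ∀ x, u x = ((b * Real.tanh (k * x) : ℝ) : ℂ) - I * κ) (x : ℝ) :
    I * c * deriv u x + deriv (deriv u) x + u x * (1 - ((‖u x‖) ^ 2 : ℝ)) = 0 := by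
  obtain rfl : u = fun x => ((b * Real.tanh (k * x) : ℝ) : ℂ) - I * κ := funext hu
  rw [deriv_ofReal_sub_const (hasDerivAt_mul_tanh_mul b k),
    (hasDerivAt_mul_sech_sq_mul b k x).ofReal_comp.deriv, sq_norm_ofReal_sub_I_mul_ofReal]
  set t := Real.tanh (k * x)
  simp only [Complex.ext_iff, add_re, add_im, sub_re, sub_im, mul_re, mul_im, I_re, I_im,
    ofReal_re, ofReal_im, one_re, one_im, zero_re, zero_im]
  constructor
  · linear_combination (-(b * t * (1 - t ^ 2))) * hk - b * t * hb
  · linear_combination b * (1 - t ^ 2) * hc + κ * hb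
/-- The explicit dark soliton `u(x) = √((2−c²)/2)·tanh(√(2−c²)·x/2) − i·c/√2`
solves the local Gross–Pitaevskii traveling-wave equation
`i·c·u′ + u′′ + u·(1 − |u|²) = 0` on `ℝ`, for every `0 ≤ c < √2`. -/
theorem soliton_solves_local_GP (c : ℝ) (hc0 : 0 ≤ c) (hc : c < Real.sqrt 2)
    (u : ℝ → ℂ)
    (hu : ∀ x : ℝ,
      u x = (↑(Real.sqrt ((2 - c ^ 2) / 2) * Real.tanh (Real.sqrt (2 - c ^ 2) * x / 2)) : ℂ)
        - Complex.I * (↑(c / Real.sqrt 2) : ℂ)) :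
    ∀ x : ℝ,
      Complex.I * (c : ℂ) * deriv u x + deriv (deriv u) x
        + u x * (1 - ((‖u x‖) ^ 2 : ℝ)) = 0 := by
  have hc2 : c ^ 2 < 2 := by nlinarith [Real.sq_sqrt (zero_le_two : (0 : ℝ) ≤ 2)]
  have hs : Real.sqrt (2 - c ^ 2) ^ 2 = 2 - c ^ 2 := Real.sq_sqrt (by linarith)
  have hb : Real.sqrt ((2 - c ^ 2) / 2) ^ 2 = (2 - c ^ 2) / 2 := Real.sq_sqrt (by linarith)
  have h2 : Real.sqrt 2 ^ 2 = 2 := Real.sq_sqrt zero_le_two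
  have hsb : Real.sqrt 2 * Real.sqrt ((2 - c ^ 2) / 2) = Real.sqrt (2 - c ^ 2) := by
    rw [← Real.sqrt_mul zero_le_two, mul_div_cancel₀ _ two_ne_zero]
  refine tanh_profile_solves_GP (k := Real.sqrt (2 - c ^ 2) / 2) ?_ ?_ ?_
    fun x => by rw [hu, mul_div_right_comm]
  · rw [hb, div_pow, h2]
    ring
  · rw [hb, div_pow, hs]
    ring
  · rw [← hsb]
    field_simp
    rw [h2]
end

section
/- Let c ≥ 0 and let u : ℝ → ℂ be a twice continuously differentiable solution of i·c·u′ + u′′ + u·(W ∗ (1 − |u|²)) = 0 on ℝ, where W ∗ f denotes convolution with a finite signed measure W. Then the function v = |u|² satisfies the differential inequality −v′′ ≤ (2·(W ∗ (1 − v)) + c²/2)·v on ℝ. -/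
open MeasureTheory

/-- Integration of a real function against a finite signed Borel measure `W`,
defined via the Jordan decomposition `W = W⁺ − W⁻`. -/
noncomputable def signedIntegral (W : MeasureTheory.SignedMeasure ℝ) (f : ℝ → ℝ) : ℝ :=
  (∫ y, f y ∂W.toJordanDecomposition.posPart) - ∫ y, f y ∂W.toJordanDecomposition.negPart

/-- Convolution `(W ∗ f)(x) = ∫ f(x − y) dW(y)` of a finite signed measure with a function. -/
noncomputable def signedConv (W : MeasureTheory.SignedMeasure ℝ) (f : ℝ → ℝ) (x : ℝ) : ℝ :=
  signedIntegral W (fun y => f (x - y))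

/-! Since `v'' = 2‖u'‖² + 2⟪u, u''⟫`, substituting `u'' = -i c u' - (W ∗ (1 - v)) u` gives
`-v'' = 2 (W ∗ (1 - v)) v + 2c⟪u, i u'⟫ - 2‖u'‖²`, and the last two terms are at most `c² v / 2`
because `0 ≤ 2‖i u' - (c/2) u‖²`. -/

open scoped RealInnerProductSpace

section InnerProductSpace

variable {E : Type*} [NormedAddCommGroup E] [InnerProductSpace ℝ E]

theorem deriv_deriv_norm_sq {u : ℝ → E} (hu : ContDiff ℝ 2 u) (x : ℝ) :
    deriv (deriv fun t => ‖u t‖ ^ 2) x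
      = 2 * (‖deriv u x‖ ^ 2 + ⟪u x, deriv (deriv u) x⟫) := by
  have hu' : ContDiff ℝ 1 (deriv u) := hu.iterate_deriv' 1 1
  have hdu : ∀ t, HasDerivAt u (deriv u t) t :=
    fun t => (hu.differentiable (by norm_num) t).hasDerivAt
  have hddu : HasDerivAt (deriv u) (deriv (deriv u) x) x :=
    (hu'.differentiable one_ne_zero x).hasDerivAt
  have hdv : deriv (fun t => ‖u t‖ ^ 2) = fun t => 2 * ⟪u t, deriv u t⟫ :=
    funext fun t => (hdu t).norm_sq.deriv
  rw [hdv, (((hdu x).inner ℝ hddu).const_mul 2).deriv, real_inner_self_eq_norm_sq]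
  ring

theorem two_mul_inner_sub_two_mul_norm_sq_le (c : ℝ) (x y : E) :
    2 * c * ⟪x, y⟫ - 2 * ‖y‖ ^ 2 ≤ c ^ 2 / 2 * ‖x‖ ^ 2 := by
  have h := norm_sub_sq_real y ((c / 2) • x)
  rw [real_inner_smul_right, norm_smul, Real.norm_eq_abs, mul_pow, sq_abs, real_inner_comm] at h
  nlinarith [sq_nonneg ‖y - (c / 2) • x‖]

end InnerProductSpace

theorem modulus_squared_diff_ineq_general (c : ℝ)
    (W : MeasureTheory.SignedMeasure ℝ) (u : ℝ → ℂ) (hu : ContDiff ℝ 2 u)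
    (heq : ∀ x : ℝ,
      Complex.I * (c : ℂ) * deriv u x + deriv (deriv u) x
        + u x * ((signedConv W (fun y => 1 - ‖u y‖ ^ 2) x : ℝ) : ℂ) = 0)
    (v : ℝ → ℝ) (hv : ∀ x : ℝ, v x = ‖u x‖ ^ 2) :
    ∀ x : ℝ,
      -(deriv (deriv v) x) ≤ (2 * signedConv W (fun y => 1 - v y) x + c ^ 2 / 2) * v x := by
  obtain rfl : v = fun t => ‖u t‖ ^ 2 := funext hv
  intro x
  set F := signedConv W (fun y => 1 - ‖u y‖ ^ 2) x
  have hu'' : deriv (deriv u) x = -(c • (Complex.I * deriv u x)) - F • u x := by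
    simp only [Complex.real_smul]
    linear_combination heq x
  have hinner : ⟪u x, deriv (deriv u) x⟫
      = -(c * ⟪u x, Complex.I * deriv u x⟫) - F * ‖u x‖ ^ 2 := by
    rw [hu'', inner_sub_right, inner_neg_right, real_inner_smul_right, real_inner_smul_right,
      real_inner_self_eq_norm_sq]
  have hbound := two_mul_inner_sub_two_mul_norm_sq_le c (u x) (Complex.I * deriv u x)
  rw [norm_mul, Complex.norm_I, one_mul] at hbound
  rw [deriv_deriv_norm_sq hu, hinner]
  linarith

/-- If `u` is a `C²` solution of `i·c·u′ + u′′ + u·(W ∗ (1 − |u|²)) = 0` on `ℝ`,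
with `c ≥ 0` and `W` a finite signed measure, then `v = |u|²` satisfies the
differential inequality `−v′′ ≤ (2·(W ∗ (1 − v)) + c²/2)·v` on `ℝ`. -/
theorem modulus_squared_diff_ineq (c : ℝ) (hc : 0 ≤ c)
    (W : MeasureTheory.SignedMeasure ℝ) (u : ℝ → ℂ) (hu : ContDiff ℝ 2 u)
    (heq : ∀ x : ℝ,
      Complex.I * (c : ℂ) * deriv u x + deriv (deriv u) x
        + u x * ((signedConv W (fun y => 1 - ‖u y‖ ^ 2) x : ℝ) : ℂ) = 0)
    (v : ℝ → ℝ) (hv : ∀ x : ℝ, v x = ‖u x‖ ^ 2) :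
    ∀ x : ℝ,
      -(deriv (deriv v) x) ≤ (2 * signedConv W (fun y => 1 - v y) x + c ^ 2 / 2) * v x :=
  modulus_squared_diff_ineq_general c W u hu heq v hv
end

section
/- Let W = A·(δ₀ + μ), where μ ∈ L¹(ℝ) is even with μ ≤ 0, ‖μ‖_{L¹} < 1, and A = 1/(1 − ‖μ‖_{L¹}) > 0, so that Ŵ(0) = 1. Let u : ℝ → ℝ be a C² bounded solution of u′′ + u·(W ∗ (1 − u²)) = 0 satisfying |u| ≤ 1 on ℝ and u(x) → ±1 as x → ±∞. Then −1 < u(x) < 1 for all x ∈ ℝ. -/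
/-!
If `u` touches `1` at some point, then `w = 1 - u ≥ 0` vanishes there together with `w'`, and
wherever `u ≥ 0` the equation gives `w'' ≤ 2A w`, because `μ ≤ 0` makes the nonlocal part of
`W ∗ (1 - u²)` nonpositive. With `c = √(2A)`, a first-order Grönwall argument applied to
`w' - c w` and then to `w` shows that `w` vanishes near every one of its zeros, so `u ≡ 1` by
connectedness, contradicting `u → -1` at `-∞`. The case `u = -1` follows by applying this
to `-u`, which solves the same equation.
-/

open MeasureTheory Set Filter Topology

section SecondOrderDifferentialInequality

variable {f f' w w' w'' : ℝ → ℝ} {k K a b : ℝ}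

theorem nonpos_of_hasDerivAt_le_mul_self (hf : ∀ x, HasDerivAt f (f' x) x)
    (hbound : ∀ x ∈ Ico a b, f' x ≤ k * f x) (ha : f a ≤ 0) : ∀ x ∈ Icc a b, f x ≤ 0 := by
  intro x hx
  calc f x ≤ gronwallBound 0 k 0 (x - a) :=
        le_gronwallBound_of_liminf_deriv_right_le
          (fun y _ => (hf y).continuousAt.continuousWithinAt)
          (fun y _ _ hr => (hf y).hasDerivWithinAt.liminf_right_slope_le hr) ha
          (by simpa using hbound) x hx
    _ = 0 := gronwallBound_ε0_δ0 k _

theorem eqOn_zero_of_snd_deriv_le_mul_self_right (hw : ∀ x, HasDerivAt w (w' x) x)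
    (hw' : ∀ x, HasDerivAt w' (w'' x) x) (hnonneg : ∀ x ∈ Icc a b, 0 ≤ w x)
    (hbound : ∀ x ∈ Icc a b, w'' x ≤ K * w x) (ha : w a = 0) (ha' : w' a = 0) :
    EqOn w 0 (Icc a b) := by
  set c := Real.sqrt |K|
  have hc : c ^ 2 = |K| := Real.sq_sqrt (abs_nonneg K)
  -- `(w' - c w)' ≤ -c (w' - c w)`, since `w'' ≤ K w ≤ c² w`
  have hslope : ∀ x ∈ Icc a b, w' x - c * w x ≤ 0 := by
    refine nonpos_of_hasDerivAt_le_mul_self (k := -c)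
      (fun x => (hw' x).sub ((hw x).const_mul c)) (fun x hx => ?_) (by simp [ha, ha'])
    have hx := Ico_subset_Icc_self hx
    nlinarith [hbound x hx, hnonneg x hx, le_abs_self K]
  have hnonpos := nonpos_of_hasDerivAt_le_mul_self (k := c) hw
    (fun x hx => by linarith [hslope x (Ico_subset_Icc_self hx)]) ha.le
  exact fun x hx => le_antisymm (hnonpos x hx) (hnonneg x hx)

theorem eqOn_zero_of_snd_deriv_le_mul_self_left (hw : ∀ x, HasDerivAt w (w' x) x)
    (hw' : ∀ x, HasDerivAt w' (w'' x) x) (hnonneg : ∀ x ∈ Icc b a, 0 ≤ w x)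
    (hbound : ∀ x ∈ Icc b a, w'' x ≤ K * w x) (ha : w a = 0) (ha' : w' a = 0) :
    EqOn w 0 (Icc b a) := by
  have hreflect := eqOn_zero_of_snd_deriv_le_mul_self_right (a := -a) (b := -b)
    (w := fun x => w (-x)) (w' := fun x => -w' (-x)) (w'' := fun x => w'' (-x))
    (fun x => by simpa [Function.comp_def] using (hw (-x)).comp x (hasDerivAt_neg x))
    (fun x => by simpa [Function.comp_def] using ((hw' (-x)).comp x (hasDerivAt_neg x)).fun_neg)
    (fun x hx => hnonneg (-x) (neg_mem_Icc_iff.2 hx))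
    (fun x hx => hbound (-x) (neg_mem_Icc_iff.2 hx)) (by simpa) (by simpa)
  intro x hx
  simpa using hreflect (x := -x) (neg_mem_Icc_iff.1 (by simpa using hx))

theorem eventuallyEq_zero_of_snd_deriv_le_mul_self (hw : ∀ x, HasDerivAt w (w' x) x)
    (hw' : ∀ x, HasDerivAt w' (w'' x) x) (hnonneg : ∀ x, 0 ≤ w x)
    (hbound : ∀ᶠ x in 𝓝 a, w'' x ≤ K * w x) (ha : w a = 0) : w =ᶠ[𝓝 a] 0 := by
  have ha' : w' a = 0 :=
    IsLocalMin.hasDerivAt_eq_zero (Eventually.of_forall fun x => ha ▸ hnonneg x) (hw a)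
  obtain ⟨ε, hε, hsub⟩ := (nhds_basis_Icc_pos a).eventually_iff.1 hbound
  refine (nhds_basis_Icc_pos a).eventually_iff.2 ⟨ε, hε, fun x hx => ?_⟩
  rcases le_total a x with hax | hxa
  · exact eqOn_zero_of_snd_deriv_le_mul_self_right hw hw' (fun y _ => hnonneg y)
      (fun y hy => hsub ⟨by linarith [hy.1], hy.2⟩) ha ha' ⟨hax, hx.2⟩
  · exact eqOn_zero_of_snd_deriv_le_mul_self_left hw hw' (fun y _ => hnonneg y)
      (fun y hy => hsub ⟨hy.1, by linarith [hy.2]⟩) ha ha' ⟨hx.1, hxa⟩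

theorem eq_zero_of_snd_deriv_le_mul_self (hw : ∀ x, HasDerivAt w (w' x) x)
    (hw' : ∀ x, HasDerivAt w' (w'' x) x) (hnonneg : ∀ x, 0 ≤ w x)
    (hbound : ∀ a, w a = 0 → ∀ᶠ x in 𝓝 a, w'' x ≤ K * w x) (hzero : ∃ a, w a = 0) :
    w = 0 := by
  have hclopen : IsClopen {x | w x = 0} :=
    ⟨isClosed_eq (continuous_iff_continuousAt.2 fun x => (hw x).continuousAt) continuous_const,
      isOpen_iff_mem_nhds.2 fun a ha =>
        eventuallyEq_zero_of_snd_deriv_le_mul_self hw hw' hnonneg (hbound a ha) ha⟩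
  funext x
  exact eq_univ_iff_forall.1 (hclopen.eq_univ hzero) x

end SecondOrderDifferentialInequality

section NonlocalEquation

variable {A : ℝ} {μ u : ℝ → ℝ}

/-- `(W ∗ (1 - u²))(x)` for the kernel `W = A (δ₀ + μ)`. -/
noncomputable def nonlocalPotential (A : ℝ) (μ u : ℝ → ℝ) (x : ℝ) : ℝ :=
  A * ((1 - (u x) ^ 2) + ∫ y : ℝ, μ y * (1 - (u (x - y)) ^ 2))

def SolvesNonlocalGP (A : ℝ) (μ u : ℝ → ℝ) : Prop :=
  ∀ x, deriv (deriv u) x + u x * nonlocalPotential A μ u x = 0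

@[simp]
theorem nonlocalPotential_neg : nonlocalPotential A μ (-u) = nonlocalPotential A μ u := by
  funext x
  simp [nonlocalPotential]

theorem nonlocalPotential_le (hμ : ∀ x, μ x ≤ 0) (hA : 0 ≤ A) (hub : ∀ x, |u x| ≤ 1)
    (x : ℝ) : nonlocalPotential A μ u x ≤ A * (1 - u x ^ 2) := by
  have hint : ∫ y : ℝ, μ y * (1 - (u (x - y)) ^ 2) ≤ 0 :=
    integral_nonpos fun y => mul_nonpos_of_nonpos_of_nonneg (hμ y)
      (sub_nonneg.2 ((sq_le_one_iff_abs_le_one _).2 (hub _)))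
  unfold nonlocalPotential
  nlinarith

theorem SolvesNonlocalGP.neg (h : SolvesNonlocalGP A μ u) : SolvesNonlocalGP A μ (-u) := by
  intro x
  simp only [deriv.neg', deriv.fun_neg, nonlocalPotential_neg, Pi.neg_apply]
  linarith [h x]

theorem SolvesNonlocalGP.neg_deriv_deriv_le (h : SolvesNonlocalGP A μ u) (hμ : ∀ x, μ x ≤ 0)
    (hA : 0 ≤ A) (hub : ∀ x, |u x| ≤ 1) {x : ℝ} (hx : 0 ≤ u x) :
    -deriv (deriv u) x ≤ 2 * A * (1 - u x) := by
  have hux := abs_le.1 (hub x)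
  have hsq : 0 ≤ 1 - u x ^ 2 := sub_nonneg.2 ((sq_le_one_iff_abs_le_one _).2 (hub x))
  calc -deriv (deriv u) x = u x * nonlocalPotential A μ u x := by linarith [h x]
    _ ≤ u x * (A * (1 - u x ^ 2)) :=
        mul_le_mul_of_nonneg_left (nonlocalPotential_le hμ hA hub x) hx
    _ ≤ A * (1 - u x ^ 2) := mul_le_of_le_one_left (mul_nonneg hA hsq) hux.2
    _ ≤ 2 * A * (1 - u x) := by nlinarith [mul_nonneg hA (sub_nonneg.2 hux.2)]

theorem SolvesNonlocalGP.eq_one_of_apply_eq_one (h : SolvesNonlocalGP A μ u)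
    (hμ : ∀ x, μ x ≤ 0) (hA : 0 ≤ A) (hu : ContDiff ℝ 2 u) (hub : ∀ x, |u x| ≤ 1) {x₀ : ℝ}
    (hx₀ : u x₀ = 1) : ∀ x, u x = 1 := by
  obtain ⟨hdu, -, hu'⟩ := contDiff_succ_iff_deriv.1 (show ContDiff ℝ (1 + 1) u from hu)
  have hddu : Differentiable ℝ (deriv u) := hu'.differentiable one_ne_zero
  have hw := eq_zero_of_snd_deriv_le_mul_self (w := fun x => 1 - u x) (K := 2 * A)
    (fun x => (hdu x).hasDerivAt.const_sub 1) (fun x => (hddu x).hasDerivAt.neg)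
    (fun x => sub_nonneg.2 (abs_le.1 (hub x)).2)
    (fun a ha => (hdu.continuous.tendsto a).eventually (eventually_gt_nhds (by linarith))
      |>.mono fun x hx => h.neg_deriv_deriv_le hμ hA hub hx.le)
    ⟨x₀, by simp [hx₀]⟩
  exact fun x => (sub_eq_zero.1 (congrFun hw x)).symm

end NonlocalEquation

theorem strict_bounds_black_soliton_general
    (μ : ℝ → ℝ)
    (hμnonpos : ∀ x : ℝ, μ x ≤ 0)
    (hμnorm : (∫ x : ℝ, |μ x|) < 1)
    (A : ℝ) (hA : A = 1 / (1 - ∫ x : ℝ, |μ x|))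
    (u : ℝ → ℝ) (hu : ContDiff ℝ 2 u) (hub : ∀ x : ℝ, |u x| ≤ 1)
    (heq : ∀ x : ℝ,
      deriv (deriv u) x
        + u x * (A * ((1 - (u x) ^ 2) + ∫ y : ℝ, μ y * (1 - (u (x - y)) ^ 2))) = 0)
    (hlimTop : Filter.Tendsto u Filter.atTop (nhds 1))
    (hlimBot : Filter.Tendsto u Filter.atBot (nhds (-1))) :
    ∀ x : ℝ, -1 < u x ∧ u x < 1 := by
  have hA_nonneg : 0 ≤ A := hA ▸ one_div_nonneg.2 (by linarith)
  have hsol : SolvesNonlocalGP A μ u := heq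
  intro x
  obtain ⟨hlower, hupper⟩ := abs_le.1 (hub x)
  refine ⟨hlower.lt_of_ne fun hx => ?_, hupper.lt_of_ne fun hx => ?_⟩
  · have hneg : ∀ y, -u y = 1 :=
      hsol.neg.eq_one_of_apply_eq_one hμnonpos hA_nonneg hu.neg (by simpa using hub) (x₀ := x)
        (by simp [← hx])
    have hconst : Tendsto u atTop (𝓝 (-1)) :=
      tendsto_const_nhds.congr fun y => by linarith [hneg y]
    exact absurd (tendsto_nhds_unique hlimTop hconst) (by norm_num)
  · have hone := hsol.eq_one_of_apply_eq_one hμnonpos hA_nonneg hu hub hx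
    have hconst : Tendsto u atBot (𝓝 1) := tendsto_const_nhds.congr fun y => (hone y).symm
    exact absurd (tendsto_nhds_unique hlimBot hconst) (by norm_num)

/-- Let `W = A·(δ₀ + μ)` with `μ ∈ L¹(ℝ)` even, `μ ≤ 0`, `‖μ‖₁ < 1` and
`A = 1/(1 − ‖μ‖₁)` (so `Ŵ(0) = 1`). If `u : ℝ → ℝ` is a bounded `C²` solution of
`u″ + u·(W ∗ (1 − u²)) = 0` with `|u| ≤ 1` and `u(x) → ±1` as `x → ±∞`, then
`−1 < u < 1` on `ℝ`. -/
theorem strict_bounds_black_soliton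
    (μ : ℝ → ℝ) (hμint : Integrable μ) (hμeven : ∀ x : ℝ, μ (-x) = μ x)
    (hμnonpos : ∀ x : ℝ, μ x ≤ 0)
    (hμnorm : (∫ x : ℝ, |μ x|) < 1)
    (A : ℝ) (hA : A = 1 / (1 - ∫ x : ℝ, |μ x|))
    (u : ℝ → ℝ) (hu : ContDiff ℝ 2 u) (hub : ∀ x : ℝ, |u x| ≤ 1)
    (heq : ∀ x : ℝ,
      deriv (deriv u) x
        + u x * (A * ((1 - (u x) ^ 2) + ∫ y : ℝ, μ y * (1 - (u (x - y)) ^ 2))) = 0)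
    (hlimTop : Filter.Tendsto u Filter.atTop (nhds 1))
    (hlimBot : Filter.Tendsto u Filter.atBot (nhds (-1))) :
    ∀ x : ℝ, -1 < u x ∧ u x < 1 :=
  strict_bounds_black_soliton_general μ hμnonpos hμnorm A hA u hu hub heq hlimTop hlimBot
end

section
/- Let c ≥ 0, and let τ, σ > 0 with τ < π/√(8 + 2c²). Suppose v : ℝ → ℝ is C², nonnegative, attains its maximum M at 0, satisfies −v″ ≤ (2 + c²/2)·v on ℝ, and there exist points y₋ ∈ (−τ, 0) and y₊ ∈ (0, τ) with v(y₋) ≤ K and v(y₊) ≤ K, where K = (1 + c²/4)/(τσ). Then M ≤ K·sec(τ·√(2 + c²/2)). -/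
/-!
With `λ = √(2 + c²/2)`, the function `w x = K sec(λτ) cos(λx)` solves `w'' + λ²w = 0` and
dominates `v` at `y₋` and `y₊`, because `|y±| < τ < π/(2λ)`. Hence `φ = w - v` satisfies
`φ'' + λ²φ ≤ 0` on `[y₋, y₊]`, an interval of length `< π/λ`, and is nonnegative at its
endpoints, so the maximum principle gives `φ 0 ≥ 0`, i.e. `M = v 0 ≤ w 0`.

The maximum principle comes from the positive solution `ψ x = cos(λ(x - m))`, `m` the midpoint:
the Wronskian `W = φ'ψ - φψ'` is nonincreasing, so the derivative `W/ψ²` of `φ/ψ` changes sign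
at most once, from `+` to `-`, and `φ/ψ` takes its minimum at an endpoint.
-/

open Real Set

theorem min_le_of_hasDerivAt_mul_of_antitoneOn {r p W : ℝ → ℝ} {a b x : ℝ}
    (hr : ∀ y ∈ Icc a b, HasDerivAt r (p y * W y) y) (hp : ∀ y ∈ Icc a b, 0 ≤ p y)
    (hW : AntitoneOn W (Icc a b)) (hx : x ∈ Icc a b) :
    min (r a) (r b) ≤ r x := by
  have hcont : ContinuousOn r (Icc a b) := fun y hy => (hr y hy).continuousAt.continuousWithinAt
  rcases le_total (W x) 0 with hWx | hWx
  · have hsub : Icc x b ⊆ Icc a b := Icc_subset_Icc_left hx.1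
    have hanti : AntitoneOn r (Icc x b) := by
      refine antitoneOn_of_hasDerivWithinAt_nonpos (convex_Icc x b) (hcont.mono hsub)
        (fun y hy => (hr y (hsub (interior_subset hy))).hasDerivWithinAt) fun y hy => ?_
      rw [interior_Icc] at hy
      have hy' : y ∈ Icc a b := hsub (Ioo_subset_Icc_self hy)
      exact mul_nonpos_of_nonneg_of_nonpos (hp y hy') ((hW hx hy' hy.1.le).trans hWx)
    exact min_le_of_right_le (hanti ⟨le_rfl, hx.2⟩ ⟨hx.2, le_rfl⟩ hx.2)
  · have hsub : Icc a x ⊆ Icc a b := Icc_subset_Icc_right hx.2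
    have hmono : MonotoneOn r (Icc a x) := by
      refine monotoneOn_of_hasDerivWithinAt_nonneg (convex_Icc a x) (hcont.mono hsub)
        (fun y hy => (hr y (hsub (interior_subset hy))).hasDerivWithinAt) fun y hy => ?_
      rw [interior_Icc] at hy
      have hy' : y ∈ Icc a b := hsub (Ioo_subset_Icc_self hy)
      exact mul_nonneg (hp y hy') (hWx.trans (hW hy' hx hy.2.le))
    exact min_le_of_left_le (hmono ⟨le_rfl, hx.1⟩ ⟨hx.1, le_rfl⟩ hx.1)

theorem nonneg_on_Icc_of_wronskian_deriv_nonpos {f f' f'' ψ ψ' ψ'' : ℝ → ℝ} {a b : ℝ}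
    (hf : ∀ x ∈ Icc a b, HasDerivAt f (f' x) x) (hf' : ∀ x ∈ Icc a b, HasDerivAt f' (f'' x) x)
    (hψ : ∀ x ∈ Icc a b, HasDerivAt ψ (ψ' x) x) (hψ' : ∀ x ∈ Icc a b, HasDerivAt ψ' (ψ'' x) x)
    (hψpos : ∀ x ∈ Icc a b, 0 < ψ x) (hfψ : ∀ x ∈ Icc a b, f'' x * ψ x ≤ f x * ψ'' x)
    (ha : 0 ≤ f a) (hb : 0 ≤ f b) : ∀ x ∈ Icc a b, 0 ≤ f x := by
  set W : ℝ → ℝ := fun x => f' x * ψ x - f x * ψ' x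
  have hW : ∀ x ∈ Icc a b, HasDerivAt W (f'' x * ψ x - f x * ψ'' x) x := fun x hx =>
    (((hf' x hx).mul (hψ x hx)).sub ((hf x hx).mul (hψ' x hx))).congr_deriv (by ring)
  have hWanti : AntitoneOn W (Icc a b) :=
    antitoneOn_of_hasDerivWithinAt_nonpos (convex_Icc a b)
      (fun x hx => (hW x hx).continuousAt.continuousWithinAt)
      (fun x hx => (hW x (interior_subset hx)).hasDerivWithinAt)
      fun x hx => sub_nonpos.2 (hfψ x (interior_subset hx))
  have hratio : ∀ x ∈ Icc a b, HasDerivAt (fun x => f x / ψ x) ((ψ x ^ 2)⁻¹ * W x) x :=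
    fun x hx => ((hf x hx).div (hψ x hx) (hψpos x hx).ne').congr_deriv (by ring)
  intro x hx
  have hab : a ≤ b := hx.1.trans hx.2
  have hmin := min_le_of_hasDerivAt_mul_of_antitoneOn hratio (fun y _ => by positivity) hWanti hx
  have hratio_nonneg : 0 ≤ f x / ψ x :=
    (le_min (div_nonneg ha (hψpos a ⟨le_rfl, hab⟩).le)
      (div_nonneg hb (hψpos b ⟨hab, le_rfl⟩).le)).trans hmin
  exact div_mul_cancel₀ (f x) (hψpos x hx).ne' ▸ mul_nonneg hratio_nonneg (hψpos x hx).le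

theorem hasDerivAt_cos_mul_sub (s m x : ℝ) :
    HasDerivAt (fun y => cos (s * (y - m))) (-(s * sin (s * (x - m)))) x := by
  simpa [mul_comm] using ((hasDerivAt_id x).sub_const m).const_mul s |>.cos

theorem hasDerivAt_sin_mul_sub (s m x : ℝ) :
    HasDerivAt (fun y => sin (s * (y - m))) (s * cos (s * (x - m))) x := by
  simpa [mul_comm] using ((hasDerivAt_id x).sub_const m).const_mul s |>.sin

theorem nonneg_on_Icc_of_deriv2_add_mul_nonpos {f f' f'' : ℝ → ℝ} {k a b : ℝ} (hk : 0 ≤ k)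
    (hab : √k * (b - a) < π)
    (hf : ∀ x ∈ Icc a b, HasDerivAt f (f' x) x) (hf' : ∀ x ∈ Icc a b, HasDerivAt f' (f'' x) x)
    (hL : ∀ x ∈ Icc a b, f'' x + k * f x ≤ 0) (ha : 0 ≤ f a) (hb : 0 ≤ f b) :
    ∀ x ∈ Icc a b, 0 ≤ f x := by
  set s := √k
  set m := (a + b) / 2
  have hs : 0 ≤ s := sqrt_nonneg k
  have hψpos : ∀ x ∈ Icc a b, 0 < cos (s * (x - m)) := fun x hx => by
    have h₁ : s * (a - m) ≤ s * (x - m) := mul_le_mul_of_nonneg_left (by linarith [hx.1]) hs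
    have h₂ : s * (x - m) ≤ s * (b - m) := mul_le_mul_of_nonneg_left (by linarith [hx.2]) hs
    have hma : s * (a - m) = -(s * (b - a) / 2) := by ring
    have hmb : s * (b - m) = s * (b - a) / 2 := by ring
    exact cos_pos_of_mem_Ioo ⟨by linarith, by linarith⟩
  refine nonneg_on_Icc_of_wronskian_deriv_nonpos hf hf'
    (fun x _ => hasDerivAt_cos_mul_sub s m x)
    (fun x _ => ((hasDerivAt_sin_mul_sub s m x).const_mul s).neg) hψpos (fun x hx => ?_) ha hb
  linear_combination mul_nonpos_of_nonpos_of_nonneg (hL x hx) (hψpos x hx).le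
    + f x * cos (s * (x - m)) * mul_self_sqrt hk

theorem le_mul_cos_of_neg_deriv2_le_mul {v v' v'' : ℝ → ℝ} {k A m a b : ℝ} (hk : 0 ≤ k)
    (hab : √k * (b - a) < π)
    (hv : ∀ x ∈ Icc a b, HasDerivAt v (v' x) x) (hv' : ∀ x ∈ Icc a b, HasDerivAt v' (v'' x) x)
    (hL : ∀ x ∈ Icc a b, -v'' x ≤ k * v x)
    (ha : v a ≤ A * cos (√k * (a - m))) (hb : v b ≤ A * cos (√k * (b - m))) :
    ∀ x ∈ Icc a b, v x ≤ A * cos (√k * (x - m)) := fun x hx =>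
  sub_nonneg.1 <| nonneg_on_Icc_of_deriv2_add_mul_nonpos
    (f := fun x => A * cos (√k * (x - m)) - v x) hk hab
    (fun x hx => ((hasDerivAt_cos_mul_sub _ m x).const_mul A).sub (hv x hx))
    (fun x hx => (((hasDerivAt_sin_mul_sub _ m x).const_mul _).neg.const_mul A).sub (hv' x hx))
    (fun x hx => by linear_combination hL x hx - A * cos (√k * (x - m)) * mul_self_sqrt hk)
    (sub_nonneg.2 ha) (sub_nonneg.2 hb) x hx

theorem cos_le_cos_of_abs_le {x y : ℝ} (hy : y ≤ π) (hxy : |x| ≤ y) : cos y ≤ cos x :=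
  cos_abs x ▸ cos_le_cos_of_nonneg_of_le_pi (abs_nonneg x) hy hxy

theorem supersolution_comparison_bound_general (c τ : ℝ)
    (hτπ : τ < Real.pi / Real.sqrt (8 + 2 * c ^ 2))
    (v : ℝ → ℝ) (hv : ContDiff ℝ 2 v) (hvpos : ∀ x, 0 ≤ v x)
    (M : ℝ) (hM0 : v 0 = M)
    (hineq : ∀ x : ℝ, -(deriv (deriv v) x) ≤ (2 + c ^ 2 / 2) * v x)
    (K : ℝ)
    (ym yp : ℝ) (hy₁ : ym ∈ Set.Ioo (-τ) 0) (hy₂ : yp ∈ Set.Ioo 0 τ)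
    (hv₁ : v ym ≤ K) (hv₂ : v yp ≤ K) :
    M ≤ K * (1 / Real.cos (τ * Real.sqrt (2 + c ^ 2 / 2))) := by
  set k := 2 + c ^ 2 / 2
  have hs : 0 < √k := sqrt_pos.2 (by positivity)
  have hsτ : √k * τ < π / 2 := by
    rw [show (8 : ℝ) + 2 * c ^ 2 = 2 ^ 2 * k by ring, sqrt_mul (by norm_num), sqrt_sq (by norm_num),
      lt_div_iff₀ (by positivity)] at hτπ
    linarith
  have hτ : 0 < τ := hy₂.1.trans hy₂.2
  have hcosτ : 0 < cos (τ * √k) := cos_pos_of_mem_Ioo ⟨by nlinarith, by linarith⟩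
  set A := K / cos (τ * √k)
  have hdom : ∀ y, |y| ≤ τ → K ≤ A * cos (√k * (y - 0)) := fun y hy => calc
    K = A * cos (τ * √k) := (div_mul_cancel₀ K hcosτ.ne').symm
    _ ≤ A * cos (√k * (y - 0)) := by
      refine mul_le_mul_of_nonneg_left (cos_le_cos_of_abs_le (by linarith [pi_pos]) ?_)
        (div_nonneg ((hvpos yp).trans hv₂) hcosτ.le)
      rw [sub_zero, abs_mul, abs_of_pos hs, mul_comm τ]
      exact mul_le_mul_of_nonneg_left hy hs.le
  have hcomp := le_mul_cos_of_neg_deriv2_le_mul (v := v) (m := 0) (by positivity)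
    (by nlinarith [hy₁.1, hy₂.2])
    (fun x _ => (hv.differentiable (by norm_num) x).hasDerivAt)
    (fun x _ => ((hv.iterate_deriv' 1 1).differentiable one_ne_zero x).hasDerivAt)
    (fun x _ => hineq x)
    (hv₁.trans (hdom ym (abs_le.2 ⟨hy₁.1.le, by linarith [hy₁.2]⟩)))
    (hv₂.trans (hdom yp (abs_le.2 ⟨by linarith [hy₂.1], hy₂.2.le⟩))) 0 ⟨hy₁.2.le, hy₂.1.le⟩
  rw [sub_zero, mul_zero, cos_zero, mul_one, hM0] at hcomp
  rwa [mul_one_div]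

/-- Comparison estimate: if `v ≥ 0` is `C²`, attains its maximum `M` at `0`,
satisfies `−v″ ≤ (2 + c²/2)·v` on `ℝ`, and `v(ym), v(yp) ≤ K = (1 + c²/4)/(τσ)`
for some `ym ∈ (−τ, 0)`, `yp ∈ (0, τ)` with `τ < π/√(8 + 2c²)`, then
`M ≤ K·sec(τ·√(2 + c²/2))`. -/
theorem supersolution_comparison_bound (c τ σ : ℝ)
    (hc : 0 ≤ c) (hτ : 0 < τ) (hσ : 0 < σ)
    (hτπ : τ < Real.pi / Real.sqrt (8 + 2 * c ^ 2))
    (v : ℝ → ℝ) (hv : ContDiff ℝ 2 v) (hvpos : ∀ x, 0 ≤ v x)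
    (M : ℝ) (hM : ∀ x, v x ≤ M) (hM0 : v 0 = M)
    (hineq : ∀ x : ℝ, -(deriv (deriv v) x) ≤ (2 + c ^ 2 / 2) * v x)
    (K : ℝ) (hK : K = (1 + c ^ 2 / 4) / (τ * σ))
    (ym yp : ℝ) (hy₁ : ym ∈ Set.Ioo (-τ) 0) (hy₂ : yp ∈ Set.Ioo 0 τ)
    (hv₁ : v ym ≤ K) (hv₂ : v yp ≤ K) :
    M ≤ K * (1 / Real.cos (τ * Real.sqrt (2 + c ^ 2 / 2))) :=
  supersolution_comparison_bound_general c τ hτπ v hv hvpos M hM0 hineq K ym yp hy₁ hy₂ hv₁ hv₂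
end
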